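/- arXiv:1301.5533 — 2 statements merged into one kernel-verified Lean document; each statement's English description precedes it below -/
import Mathlib

section
/- Let B be an abelian group, A a ℤ[B]-module, I the augmentation ideal of ℤ[B], and S = {1 + x : x ∈ I}. For every s ∈ S, the ℤ[B]-module homomorphism A → A given by multiplication by s induces the identity map on second group cohomology H²(B; A) → H²(B; A). -/
open groupCohomology CategoryTheory Representation

universe u

namespace groupCohomology

/-- The old `groupCohomology.dOne`: `(f, (g₁, g₂)) ↦ ρ_A(g₁)(f(g₂)) - f(g₁g₂) + f(g₁)`. -/
noncomputable def dOne {k G : Type u} [CommRing k] [Group G] (A : Rep.{u} k G) :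
    (G → A) →ₗ[k] G × G → A :=
  (d₁₂ A).hom

theorem dOne_apply {k G : Type u} [CommRing k] [Group G] (A : Rep.{u} k G) (x : G → A)
    (g : G × G) : dOne A x g = A.ρ g.1 (x g.2) - x (g.1 * g.2) + x g.1 := rfl

/-- The old `groupCohomology.dTwo`. -/
noncomputable def dTwo {k G : Type u} [CommRing k] [Group G] (A : Rep.{u} k G) :
    (G × G → A) →ₗ[k] G × G × G → A :=
  (d₂₃ A).hom

theorem dTwo_apply {k G : Type u} [CommRing k] [Group G] (A : Rep.{u} k G) (f : G × G → A)
    (g : G × G × G) : dTwo A f g =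
      A.ρ g.1 (f (g.2.1, g.2.2)) - f (g.1 * g.2.1, g.2.2) + f (g.1, g.2.1 * g.2.2) -
        f (g.1, g.2.1) := rfl

/-- The old `groupCohomology.twoCocycles`. -/
noncomputable def twoCocycles {k G : Type u} [CommRing k] [Group G] (A : Rep.{u} k G) :
    Submodule k (G × G → A) :=
  LinearMap.ker (dTwo A)

/-- The old `groupCohomology.twoCoboundaries`, a submodule of the 2-cocycles. -/
noncomputable def twoCoboundaries {k G : Type u} [CommRing k] [Group G] (A : Rep.{u} k G) :
    Submodule k (twoCocycles A) :=
  LinearMap.range ((dOne A).codRestrict (twoCocycles A) fun c => d₁₂_apply_mem_cocycles₂ c)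

end groupCohomology

/-- The old `groupCohomology.H2`: the quotient `Z²(G, A) ⧸ B²(G, A)`. -/
noncomputable abbrev H2Old {k G : Type u} [CommRing k] [Group G] (A : Rep.{u} k G) : ModuleCat.{u} k :=
  ModuleCat.of k (twoCocycles A ⧸ twoCoboundaries A)

theorem dTwo_comp_eq_comp {k G : Type u} [CommRing k] [Group G] {A B : Rep.{u} k G}
    (f : A ⟶ B) (c : G × G → A) (x : G × G × G) :
    dTwo B (⇑f.hom ∘ c) x = f.hom (dTwo A c x) := by
  simp only [dTwo_apply, Function.comp_apply, map_sub, map_add, Rep.hom_comm_apply]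

theorem comp_mem_twoCocycles {k G : Type u} [CommRing k] [Group G] {A B : Rep.{u} k G}
    (f : A ⟶ B) (c : G × G → A) (hc : c ∈ twoCocycles A) : ⇑f.hom ∘ c ∈ twoCocycles B := by
  have h0 : dTwo A c = 0 := hc
  show dTwo B (⇑f.hom ∘ c) = 0
  funext x
  rw [dTwo_comp_eq_comp f c x, h0]
  simp

/-- The map on 2-cocycles induced by a morphism of representations. -/
noncomputable def twoCocyclesMap {k G : Type u} [CommRing k] [Group G] {A B : Rep.{u} k G}
    (f : A ⟶ B) : twoCocycles A →ₗ[k] twoCocycles B :=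
  LinearMap.codRestrict (twoCocycles B)
    ((LinearMap.compLeft f.hom.toLinearMap (G × G)).comp (twoCocycles A).subtype)
    (fun c => comp_mem_twoCocycles f c.1 c.2)

theorem dOne_comp_eq_comp {k G : Type u} [CommRing k] [Group G] {A B : Rep.{u} k G}
    (f : A ⟶ B) (x : G → A) (g : G × G) :
    dOne B (⇑f.hom ∘ x) g = f.hom (dOne A x g) := by
  simp only [dOne_apply, Function.comp_apply, map_sub, map_add, Rep.hom_comm_apply]

theorem twoCocyclesMap_coboundaries {k G : Type u} [CommRing k] [Group G] {A B : Rep.{u} k G}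
    (f : A ⟶ B) :
    twoCoboundaries A ≤ (twoCoboundaries B).comap (twoCocyclesMap f) := by
  rintro c ⟨x, hx⟩
  refine ⟨⇑f.hom ∘ x, ?_⟩
  apply Subtype.ext
  have hx' : dOne A x = (c : G × G → A) := congrArg Subtype.val hx
  funext g
  show dOne B (⇑f.hom ∘ x) g = f.hom (c.1 g)
  rw [dOne_comp_eq_comp f x g, hx']

/-- The homomorphism `H²(G; A) → H²(G; B)` induced by a morphism of representations
`A ⟶ B` (a `G`-equivariant map of coefficient modules). -/
noncomputable def H2Map {k G : Type u} [CommRing k] [Group G] {A B : Rep.{u} k G} (f : A ⟶ B) :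
    H2Old A →ₗ[k] H2Old B :=
  Submodule.mapQ (twoCoboundaries A) (twoCoboundaries B) (twoCocyclesMap f)
    (twoCocyclesMap_coboundaries f)

/-- The augmentation map `ℤ[B] → ℤ`, sending every group element to `1`. -/
noncomputable def augmentation (B : Type) [CommGroup B] : MonoidAlgebra ℤ B →ₐ[ℤ] ℤ :=
  (MonoidAlgebra.lift ℤ ℤ B) 1

/-- The augmentation ideal `I` of `ℤ[B]`: the kernel of the augmentation map. -/
noncomputable def augmentationIdeal (B : Type) [CommGroup B] : Ideal (MonoidAlgebra ℤ B) :=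
  RingHom.ker (augmentation B).toRingHom

/-- The multiplicative set `S = {1 + x : x ∈ I} ⊆ ℤ[B]`, where `I` is the augmentation
ideal. -/
noncomputable def augS (B : Type) [CommGroup B] : Submonoid (MonoidAlgebra ℤ B) where
  carrier := {r | ∃ x ∈ augmentationIdeal B, r = 1 + x}
  one_mem' := ⟨0, (augmentationIdeal B).zero_mem, by ring⟩
  mul_mem' := by
    rintro a b ⟨x, hx, rfl⟩ ⟨y, hy, rfl⟩
    exact ⟨x + y + x * y,
      Ideal.add_mem _ (Ideal.add_mem _ hx hy) (Ideal.mul_mem_right y _ hx), by ring⟩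

/-- Multiplication by a ring element `s ∈ ℤ[B]` as a morphism of representations, i.e. a
`ℤ[B]`-module homomorphism (this uses that `B` is abelian). -/
noncomputable def mulByRingElt {B V : Type} [CommGroup B] [AddCommGroup V] [Module ℤ V]
    (ρ : Representation ℤ B V) (s : MonoidAlgebra ℤ B) : Rep.of ρ ⟶ Rep.of ρ :=
  Rep.ofHom ⟨asAlgebraHom ρ s, fun h => by
    ext x
    show asAlgebraHom ρ s (ρ h x) = ρ h (asAlgebraHom ρ s x)
    have h1 : ρ h = asAlgebraHom ρ (MonoidAlgebra.of ℤ B h) := by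
      ext y
      rw [MonoidAlgebra.of_apply, Representation.asAlgebraHom_single_one]
    rw [h1, ← Module.End.mul_apply, ← Module.End.mul_apply, ← map_mul, ← map_mul, mul_comm]⟩

def D {B V : Type} [CommGroup B] [AddCommGroup V] [Module ℤ V]
    (ρ : Representation ℤ B V) (x : B → V) (p : B × B) : V :=
  ρ p.1 (x p.2) - x (p.1 * p.2) + x p.1

theorem keyLemma {G V : Type} [CommGroup G] [AddCommGroup V] [Module ℤ V]
    (ρ : Representation ℤ G V) (c : G × G → V)
    (hc : ∀ g h j : G, ρ g (c (h, j)) + c (g, h * j) = c (g * h, j) + c (g, h)) (σ : G)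
    (p : G × G) :
    D ρ (fun g => c (σ, g) - c (g, σ)) p = ρ σ (c p) - c p := by
  obtain ⟨g, h⟩ := p
  have h1 : ρ σ (c (g, h)) = c (σ * g, h) + c (σ, g) - c (σ, g * h) := by
    rw [eq_sub_iff_add_eq]; exact hc σ g h
  have h2 : ρ g (c (σ, h)) = c (g * σ, h) + c (g, σ) - c (g, σ * h) := by
    rw [eq_sub_iff_add_eq]; exact hc g σ h
  have h3 : ρ g (c (h, σ)) = c (g * h, σ) + c (g, h) - c (g, h * σ) := by
    rw [eq_sub_iff_add_eq]; exact hc g h σ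
  show ρ g (c (σ, h) - c (h, σ)) - (c (σ, g * h) - c (g * h, σ)) + (c (σ, g) - c (g, σ))
      = ρ σ (c (g, h)) - c (g, h)
  rw [map_sub, h1, h2, h3, mul_comm g σ, mul_comm g h, mul_comm h σ]
  abel

theorem rangeLemma {B V : Type} [CommGroup B] [AddCommGroup V] [Module ℤ V]
    (ρ : Representation ℤ B V) (c : B × B → V)
    (hc : ∀ g h j : B, ρ g (c (h, j)) + c (g, h * j) = c (g * h, j) + c (g, h))
    (r : MonoidAlgebra ℤ B) :
    ∃ x : B → V, ∀ p : B × B,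
      D ρ x p = asAlgebraHom ρ r (c p) - augmentation B r • c p := by
  induction r using MonoidAlgebra.induction_linear with
  | zero =>
      refine ⟨0, fun p => ?_⟩
      show ρ p.1 (0 : V) - (0 : V) + (0 : V) = _
      simp [zero_zsmul]
  | add f g hf hg =>
      obtain ⟨x, hx⟩ := hf
      obtain ⟨y, hy⟩ := hg
      refine ⟨fun g => x g + y g, fun p => ?_⟩
      have h1 : D ρ (fun g => x g + y g) p = D ρ x p + D ρ y p := by
        show ρ p.1 (x p.2 + y p.2) - (x (p.1 * p.2) + y (p.1 * p.2)) + (x p.1 + y p.1) = _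
        rw [map_add]; unfold D; abel
      rw [h1, hx p, hy p, map_add, map_add, LinearMap.add_apply, add_zsmul]
      abel
  | single b n =>
      refine ⟨fun g => n • (c (b, g) - c (g, b)), fun p => ?_⟩
      have h1 : D ρ (fun g => n • (c (b, g) - c (g, b))) p
          = n • D ρ (fun g => c (b, g) - c (g, b)) p := by
        show ρ p.1 (n • (c (b, p.2) - c (p.2, b)))
              - n • (c (b, p.1 * p.2) - c (p.1 * p.2, b)) + n • (c (b, p.1) - c (p.1, b))
            = n • (ρ p.1 (c (b, p.2) - c (p.2, b))
              - (c (b, p.1 * p.2) - c (p.1 * p.2, b)) + (c (b, p.1) - c (p.1, b)))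
        simp only [map_zsmul, zsmul_add, zsmul_sub]
        rw [← zsmul_sub, map_zsmul]
      have ha : augmentation B (MonoidAlgebra.single b n) = n := by
        simp [augmentation, MonoidAlgebra.lift_single]
      have hsm : asAlgebraHom ρ (MonoidAlgebra.single b n) (c p) = n • ρ b (c p) := by
        rw [asAlgebraHom_single]
        exact Int.cast_smul_eq_zsmul ℤ n _
      rw [h1, keyLemma ρ c hc b p, ha, hsm, zsmul_sub]

/-- Let `B` be an abelian group, `A` a `ℤ[B]`-module (i.e. a representation `ρ` of `B` on an
abelian group `V` over `ℤ`), `I` the augmentation ideal of `ℤ[B]` and `S = 1 + I`. For every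
`s ∈ S`, the `ℤ[B]`-module homomorphism `A → A` given by multiplication by `s` induces the
identity map on `H²(B; A)`. -/
theorem stmt_7 {B V : Type} [CommGroup B] [AddCommGroup V] [Module ℤ V]
    (ρ : Representation ℤ B V) (s : MonoidAlgebra ℤ B) (hs : s ∈ augS B) :
    ∀ x : H2Old (Rep.of ρ), H2Map (mulByRingElt ρ s) x = x := by
  obtain ⟨r, hrI, rfl⟩ := hs
  intro z
  obtain ⟨c, rfl⟩ := @Submodule.Quotient.mk_surjective ℤ _ _ _
    (twoCocycles (Rep.of ρ)).module (twoCoboundaries (Rep.of ρ)) z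
  refine (@Submodule.Quotient.eq ℤ _ _ _ (twoCocycles (Rep.of ρ)).module
    (twoCoboundaries (Rep.of ρ)) (twoCocyclesMap (mulByRingElt ρ (1 + r)) c) c).2 ?_
  let c' : B × B → V := c.1
  have hc : ∀ g h j : B, ρ g (c' (h, j)) + c' (g, h * j) = c' (g * h, j) + c' (g, h) :=
    fun g h j => by
      have h0 := congrFun (c.2 : dTwo (Rep.of ρ) c.1 = 0) (g, h, j)
      change ρ g (c' (h, j)) - c' (g * h, j) + c' (g, h * j) - c' (g, h) = 0 at h0
      rw [← sub_eq_zero, ← h0]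
      abel
  obtain ⟨x, hx⟩ := rangeLemma ρ c' hc r
  refine ⟨x, ?_⟩
  apply Subtype.ext
  funext p
  show D ρ x p = asAlgebraHom ρ (1 + r) (c' p) - c' p
  have haug : augmentation B r = 0 := hrI
  rw [hx p, haug, zero_zsmul, sub_zero, map_add, LinearMap.add_apply, map_one,
    Module.End.one_apply]
  abel
end

section
/- Let H be a metabelian group generated by two elements s and a. If the subgroup of H generated by the conjugates {s⁻ᵏ [s,a] sᵏ : k ∈ ℤ} of [s,a] by powers of s is finitely generated, and the subgroup generated by the conjugates {a⁻ᵏ [s,a] aᵏ : k ∈ ℤ} of [s,a] by powers of a is finitely generated, then H is polycyclic. -/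
/-- A group is polycyclic iff it is solvable and all its subgroups are finitely generated. -/
def IsPolycyclic (G : Type*) [Group G] : Prop :=
  IsSolvable G ∧ ∀ H : Subgroup G, H.FG

/-- A group is metabelian if its derived subgroup is abelian. -/
def IsMetabelian (G : Type*) [Group G] : Prop :=
  ∀ x y : G, x ∈ commutator G → y ∈ commutator G → x * y = y * x

/-- A group is residually nilpotent if the intersection of its lower central series is trivial.
(With Mathlib indexing, `γ_{n+1}(G) = lowerCentralSeries G n`.) -/
def IsResiduallyNilpotent (G : Type*) [Group G] : Prop :=
  (⨅ n : ℕ, (⊤ : Subgroup G).lowerCentralSeries n) = ⊥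

/-- The natural projection `G/γ_{n+2}(G) → G/γ_{n+1}(G)` (with Mathlib indexing,
`γ_{k+1}(G) = lowerCentralSeries G k`). -/
def nilpotentQuotientMap (G : Type*) [Group G] (n : ℕ) :
    G ⧸ (⊤ : Subgroup G).lowerCentralSeries (n + 2) →* G ⧸ (⊤ : Subgroup G).lowerCentralSeries (n + 1) :=
  QuotientGroup.map _ _ (MonoidHom.id G)
    (by simpa using Subgroup.lowerCentralSeries_antitone ⊤ (Nat.le_succ (n + 1)))

/-- The pronilpotent completion of `G`: the subgroup of `∏_{n ≥ 1} G/γ_{n+1}(G)` consisting of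
coherent sequences. -/
def pronilpotentCompletion (G : Type*) [Group G] :
    Subgroup (Π n : ℕ, G ⧸ (⊤ : Subgroup G).lowerCentralSeries (n + 1)) where
  carrier := { f | ∀ n : ℕ, nilpotentQuotientMap G n (f (n + 1)) = f n }
  one_mem' := by intro n; exact map_one (nilpotentQuotientMap G n)
  mul_mem' := by
    intro a b ha hb n
    simp only [Pi.mul_apply, map_mul, ha n, hb n]
  inv_mem' := by
    intro a ha n
    simp only [Pi.inv_apply, map_inv, ha n]

/-- The homomorphism `G/γ_{n+1}(G) → H/γ_{n+1}(H)` induced by `φ : G →* H` on the lower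
central series quotients. -/
def lcsQuotientMap {G H : Type*} [Group G] [Group H] (φ : G →* H) (n : ℕ) :
    G ⧸ (⊤ : Subgroup G).lowerCentralSeries n →* H ⧸ (⊤ : Subgroup H).lowerCentralSeries n :=
  QuotientGroup.map _ _ φ
    (Subgroup.map_le_iff_le_comap.mp (Subgroup.lowerCentralSeries.map φ n))

theorem aux_mem_closure_finset {G : Type*} [Group G] {ι : Type*} (f : ι → G) {x : G}
    (hx : x ∈ Subgroup.closure (Set.range f)) :
    ∃ F : Finset ι, x ∈ Subgroup.closure (f '' ↑F) := by
  classical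
  induction hx using Subgroup.closure_induction with
  | mem y hy =>
    obtain ⟨i, rfl⟩ := hy
    exact ⟨{i}, Subgroup.subset_closure (by simp)⟩
  | one => exact ⟨∅, Subgroup.one_mem _⟩
  | mul x y hx hy ihx ihy =>
    obtain ⟨F1, h1⟩ := ihx
    obtain ⟨F2, h2⟩ := ihy
    refine ⟨F1 ∪ F2, Subgroup.mul_mem _ ?_ ?_⟩
    · exact Subgroup.closure_mono (Set.image_mono (f := f) (by simp)) h1
    · exact Subgroup.closure_mono (Set.image_mono (f := f) (by simp)) h2
  | inv x hx ihx =>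
    obtain ⟨F, h⟩ := ihx
    exact ⟨F, Subgroup.inv_mem _ h⟩

theorem aux_exists_finset_of_fg {G : Type*} [Group G] {ι : Type*} (f : ι → G)
    (h : (Subgroup.closure (Set.range f)).FG) :
    ∃ F : Finset ι, Subgroup.closure (Set.range f) = Subgroup.closure (f '' ↑F) := by
  classical
  obtain ⟨S, hS⟩ := h
  choose F hF using fun x : {x // x ∈ S} =>
    aux_mem_closure_finset f (show (x : G) ∈ Subgroup.closure (Set.range f) by
      rw [← hS]; exact Subgroup.subset_closure x.2)
  refine ⟨S.attach.biUnion F, le_antisymm ?_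
    (Subgroup.closure_mono (by rintro _ ⟨i, _, rfl⟩; exact ⟨i, rfl⟩))⟩
  rw [← hS, Subgroup.closure_le]
  intro x hx
  exact Subgroup.closure_mono (Set.image_mono (f := f) (fun i hi =>
    Finset.mem_biUnion.2 ⟨⟨x, hx⟩, Finset.mem_attach _ _, hi⟩)) (hF ⟨x, hx⟩)

theorem aux_mem_normalizer_closure {G : Type*} [Group G] {T : Set G} {x : G}
    (h1 : ∀ t ∈ T, x * t * x⁻¹ ∈ Subgroup.closure T)
    (h2 : ∀ t ∈ T, x⁻¹ * t * x ∈ Subgroup.closure T) :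
    x ∈ Subgroup.normalizer (Subgroup.closure T : Set G) := by
  have key : ∀ (z : G) (hc : ∀ t ∈ T, z * t * z⁻¹ ∈ Subgroup.closure T),
      ∀ y ∈ Subgroup.closure T, z * y * z⁻¹ ∈ Subgroup.closure T := by
    intro z hc y hy
    induction hy using Subgroup.closure_induction with
    | mem t ht => exact hc t ht
    | one => simpa using Subgroup.one_mem _
    | mul u v hu hv ihu ihv =>
      have : z * (u * v) * z⁻¹ = (z * u * z⁻¹) * (z * v * z⁻¹) := by group
      rw [this]; exact Subgroup.mul_mem _ ihu ihv
    | inv u hu ihu =>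
      have : z * u⁻¹ * z⁻¹ = (z * u * z⁻¹)⁻¹ := by group
      rw [this]; exact Subgroup.inv_mem _ ihu
  rw [Subgroup.mem_normalizer_iff]
  intro y
  constructor
  · exact key x h1 y
  · intro hy
    have := key x⁻¹ (by simpa using h2) _ hy
    simpa [mul_assoc] using this

theorem aux_fg_of_map_of_ker {G Q : Type*} [Group G] [Group Q] (f : G →* Q) (S : Subgroup G)
    (h1 : (S.map f).FG) (h2 : (S ⊓ f.ker).FG) : S.FG := by
  classical
  obtain ⟨T, hT⟩ := h1
  obtain ⟨F, hF⟩ := h2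
  have hTmem : ∀ t : {t // t ∈ T}, (t : Q) ∈ S.map f := fun t => by
    rw [← hT]; exact Subgroup.subset_closure t.2
  choose σ hσS hσf using fun t : {t // t ∈ T} => hTmem t
  have hFsub : (F : Set G) ⊆ (S : Set G) := by
    intro g hg
    have : g ∈ S ⊓ f.ker := by rw [← hF]; exact Subgroup.subset_closure hg
    exact this.1
  set U : Set G := Set.range σ with hU
  have hUfin : U.Finite := Set.finite_range _
  rw [Subgroup.fg_iff]
  refine ⟨(F : Set G) ∪ U, le_antisymm ?_ ?_, (F.finite_toSet.union hUfin)⟩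
  · rw [Subgroup.closure_le]
    rintro g (hg | ⟨t, rfl⟩)
    · exact hFsub hg
    · exact hσS t
  · intro x hx
    have hfx : f x ∈ Subgroup.closure (f '' U) := by
      have himg : f '' U = (T : Set Q) := by
        ext q
        constructor
        · rintro ⟨g, ⟨t, rfl⟩, rfl⟩; rw [hσf t]; exact t.2
        · intro hq; exact ⟨σ ⟨q, hq⟩, ⟨⟨q, hq⟩, rfl⟩, hσf _⟩
      rw [himg, hT]
      exact Subgroup.mem_map_of_mem f hx
    rw [← MonoidHom.map_closure] at hfx
    obtain ⟨y, hy, hyx⟩ := hfx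
    have hyS : y ∈ S := by
      have : Subgroup.closure U ≤ S := Subgroup.closure_le _ |>.2 (by rintro _ ⟨t, rfl⟩; exact hσS t)
      exact this hy
    have hker : x * y⁻¹ ∈ S ⊓ f.ker := by
      refine ⟨Subgroup.mul_mem _ hx (Subgroup.inv_mem _ hyS), ?_⟩
      simp [MonoidHom.mem_ker, hyx]
    have h1' : x * y⁻¹ ∈ Subgroup.closure ((F : Set G) ∪ U) := by
      rw [← hF] at hker
      exact Subgroup.closure_mono Set.subset_union_left hker
    have h2' : y ∈ Subgroup.closure ((F : Set G) ∪ U) :=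
      Subgroup.closure_mono Set.subset_union_right hy
    have : x = (x * y⁻¹) * y := by group
    rw [this]
    exact Subgroup.mul_mem _ h1' h2'

theorem aux_comm_subgroup_fg {G : Type*} [CommGroup G] (hfg : Group.FG G) (K : Subgroup G) :
    K.FG := by
  haveI := hfg
  haveI : Module.Finite ℤ (Additive G) := Module.Finite.iff_addGroup_fg.2 (GroupFG.iff_add_fg.1 hfg)
  haveI : IsNoetherian ℤ (Additive G) := isNoetherian_of_isNoetherianRing_of_finite ℤ (Additive G)
  rw [Subgroup.fg_iff_add_fg]
  have h := IsNoetherian.noetherian (AddSubgroup.toIntSubmodule (Subgroup.toAddSubgroup K))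
  rwa [Submodule.fg_iff_addSubgroup_fg, AddSubgroup.toIntSubmodule_toAddSubgroup] at h

theorem aux_fg_map {G Q : Type*} [Group G] [Group Q] {K : Subgroup G} (h : K.FG) (f : G →* Q) :
    (K.map f).FG := by
  classical
  obtain ⟨T, hT⟩ := h
  exact ⟨T.image f, by rw [Finset.coe_image, ← MonoidHom.map_closure, hT]⟩


/-- Let `H` be a metabelian group generated by two elements `s` and `a` (here
`[s,a] = s⁻¹a⁻¹sa`). If the subgroup generated by the conjugates of `[s,a]` by powers of `s`
is finitely generated, and the subgroup generated by the conjugates of `[s,a]` by powers of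
`a` is finitely generated, then `H` is polycyclic. -/
theorem stmt_15 {H : Type*} [Group H] (hMeta : IsMetabelian H) (s a : H)
    (hgen : Subgroup.closure ({s, a} : Set H) = ⊤)
    (hs : (Subgroup.closure
      (Set.range fun k : ℤ => s ^ (-k) * (s⁻¹ * a⁻¹ * s * a) * s ^ k)).FG)
    (ha : (Subgroup.closure
      (Set.range fun k : ℤ => a ^ (-k) * (s⁻¹ * a⁻¹ * s * a) * a ^ k)).FG) :
    IsPolycyclic H := by
  classical
  set c : H := s⁻¹ * a⁻¹ * s * a with hc
  have hcA : c ∈ commutator H := by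
    open scoped commutatorElement in have h : c = ⁅s⁻¹, a⁻¹⁆ := by rw [commutatorElement_def, inv_inv, inv_inv]
    rw [h]
    exact Subgroup.commutator_mem_commutator (Subgroup.mem_top _) (Subgroup.mem_top _)
  haveI hAnormal : (commutator H).Normal := Subgroup.commutator_normal ⊤ ⊤
  have hconjA : ∀ (x g : H), g ∈ commutator H → x⁻¹ * g * x ∈ commutator H := by
    intro x g hg
    simpa using hAnormal.conj_mem g hg x⁻¹
  have hswap : ∀ g ∈ commutator H, ∀ u v : H,
      (u * v)⁻¹ * g * (u * v) = (v * u)⁻¹ * g * (v * u) := by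
    intro g hg u v
    have hd : u⁻¹ * v⁻¹ * u * v ∈ commutator H := by
      open scoped commutatorElement in have h : u⁻¹ * v⁻¹ * u * v = ⁅u⁻¹, v⁻¹⁆ := by rw [commutatorElement_def, inv_inv, inv_inv]
      rw [h]
      exact Subgroup.commutator_mem_commutator (Subgroup.mem_top _) (Subgroup.mem_top _)
    have h2 : (v * u)⁻¹ * g * (v * u) ∈ commutator H := hconjA _ _ hg
    have key : (u * v)⁻¹ * g * (u * v)
        = (u⁻¹ * v⁻¹ * u * v)⁻¹ * (((v * u)⁻¹ * g * (v * u)) * (u⁻¹ * v⁻¹ * u * v)) := by group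
    rw [key, hMeta _ _ h2 hd]
    group
  set e : ℤ → ℤ → H := fun i j => (s ^ i * a ^ j)⁻¹ * c * (s ^ i * a ^ j) with he
  have eA : ∀ i j : ℤ, e i j ∈ commutator H := fun i j => hconjA _ _ hcA
  have eform : ∀ i j : ℤ, e i j = a ^ (-j) * (s ^ (-i) * c * s ^ i) * a ^ j := by
    intro i j; simp only [he]; group
  have eswap : ∀ i j : ℤ, e i j = s ^ (-i) * (a ^ (-j) * c * a ^ j) * s ^ i := by
    intro i j
    have h := hswap c hcA (a ^ j) (s ^ i)
    simp only [he]
    rw [← h]; group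
  obtain ⟨Fs, hFs⟩ := aux_exists_finset_of_fg (fun k : ℤ => s ^ (-k) * c * s ^ k) hs
  obtain ⟨Fa, hFa⟩ := aux_exists_finset_of_fg (fun k : ℤ => a ^ (-k) * c * a ^ k) ha
  have fact1 : ∀ k j : ℤ, e k j ∈ Subgroup.closure ((fun i => e i j) '' (Fs : Set ℤ)) := by
    intro k j
    have h0 : s ^ (-k) * c * s ^ k ∈
        Subgroup.closure ((fun k : ℤ => s ^ (-k) * c * s ^ k) '' (Fs : Set ℤ)) := by
      rw [← hFs]; exact Subgroup.subset_closure ⟨k, rfl⟩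
    have h1 := Subgroup.mem_map_of_mem ((MulAut.conj (a ^ (-j))).toMonoidHom) h0
    rw [MonoidHom.map_closure, Set.image_image] at h1
    have himg : ∀ i : ℤ, (MulAut.conj (a ^ (-j))).toMonoidHom (s ^ (-i) * c * s ^ i) = e i j := by
      intro i
      simp only [MulEquiv.coe_toMonoidHom, MulAut.conj_apply]
      rw [eform i j]; group
    have himgs : ((fun x : ℤ => (MulAut.conj (a ^ (-j))).toMonoidHom (s ^ (-x) * c * s ^ x)) ''
        (Fs : Set ℤ)) = (fun i => e i j) '' (Fs : Set ℤ) :=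
      Set.image_congr' (fun i => himg i)
    rw [himgs] at h1
    rwa [himg k] at h1
  have fact2 : ∀ i j : ℤ, e i j ∈ Subgroup.closure ((fun q => e i q) '' (Fa : Set ℤ)) := by
    intro i j
    have h0 : a ^ (-j) * c * a ^ j ∈
        Subgroup.closure ((fun k : ℤ => a ^ (-k) * c * a ^ k) '' (Fa : Set ℤ)) := by
      rw [← hFa]; exact Subgroup.subset_closure ⟨j, rfl⟩
    have h1 := Subgroup.mem_map_of_mem ((MulAut.conj (s ^ (-i))).toMonoidHom) h0
    rw [MonoidHom.map_closure, Set.image_image] at h1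
    have himg : ∀ q : ℤ, (MulAut.conj (s ^ (-i))).toMonoidHom (a ^ (-q) * c * a ^ q) = e i q := by
      intro q
      simp only [MulEquiv.coe_toMonoidHom, MulAut.conj_apply]
      rw [eswap i q]; group
    have himgs : ((fun x : ℤ => (MulAut.conj (s ^ (-i))).toMonoidHom (a ^ (-x) * c * a ^ x)) ''
        (Fa : Set ℤ)) = (fun q => e i q) '' (Fa : Set ℤ) :=
      Set.image_congr' (fun q => himg q)
    rw [himgs] at h1
    rwa [himg j] at h1
  set E : Set H := Set.image2 (fun i j => e i j) (Fs : Set ℤ) (Fa : Set ℤ) with hE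
  have hEfin : E.Finite := Set.Finite.image2 _ Fs.finite_toSet Fa.finite_toSet
  have hEA : ∀ x ∈ E, x ∈ commutator H := by
    rintro x ⟨i, hi, j, hj, rfl⟩
    exact eA i j
  have hallE : ∀ k j : ℤ, e k j ∈ Subgroup.closure E := by
    intro k j
    have hsub : Subgroup.closure ((fun i => e i j) '' (Fs : Set ℤ)) ≤ Subgroup.closure E := by
      rw [Subgroup.closure_le]
      rintro x ⟨i, hi, rfl⟩
      have hsub2 : Subgroup.closure ((fun q => e i q) '' (Fa : Set ℤ)) ≤ Subgroup.closure E := by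
        rw [Subgroup.closure_le]
        rintro y ⟨q, hq, rfl⟩
        exact Subgroup.subset_closure (Set.mem_image2_of_mem hi hq)
      exact hsub2 (fact2 i j)
    exact hsub (fact1 k j)
  set N : Subgroup H := Subgroup.closure (Set.range fun p : ℤ × ℤ => e p.1 p.2) with hN
  have conj_s : ∀ i j : ℤ, s * e i j * s⁻¹ = e (i - 1) j := by
    intro i j; rw [eswap i j, eswap (i - 1) j]; group
  have conj_s' : ∀ i j : ℤ, s⁻¹ * e i j * s = e (i + 1) j := by
    intro i j; rw [eswap i j, eswap (i + 1) j]; group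
  have conj_a : ∀ i j : ℤ, a * e i j * a⁻¹ = e i (j - 1) := by
    intro i j; rw [eform i j, eform i (j - 1)]; group
  have conj_a' : ∀ i j : ℤ, a⁻¹ * e i j * a = e i (j + 1) := by
    intro i j; rw [eform i j, eform i (j + 1)]; group
  have hNmem : ∀ i j : ℤ, e i j ∈ N := fun i j => Subgroup.subset_closure ⟨(i, j), rfl⟩
  haveI hNnormal : N.Normal := by
    rw [← Subgroup.normalizer_eq_top_iff, eq_top_iff, ← hgen, Subgroup.closure_le]
    rintro x (rfl | rfl)
    · refine aux_mem_normalizer_closure ?_ ?_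
      · rintro _ ⟨⟨i, j⟩, rfl⟩
        rw [conj_s i j]; exact hNmem (i - 1) j
      · rintro _ ⟨⟨i, j⟩, rfl⟩
        rw [conj_s' i j]; exact hNmem (i + 1) j
    · refine aux_mem_normalizer_closure ?_ ?_
      · rintro _ ⟨⟨i, j⟩, rfl⟩
        rw [conj_a i j]; exact hNmem i (j - 1)
      · rintro _ ⟨⟨i, j⟩, rfl⟩
        rw [conj_a' i j]; exact hNmem i (j + 1)
  have hcN : c ∈ N := by
    have : e 0 0 = c := by simp [he]
    rw [← this]; exact hNmem 0 0
  have hcomm_le : commutator H ≤ N := by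
    rw [commutator_def, Subgroup.commutator_le]
    intro g _ h _
    have hsurj : Subgroup.closure ((QuotientGroup.mk' N) '' {s, a}) = ⊤ := by
      rw [← MonoidHom.map_closure, hgen]
      exact Subgroup.map_top_of_surjective _ (QuotientGroup.mk'_surjective N)
    have hbase : Commute ((QuotientGroup.mk' N) s) ((QuotientGroup.mk' N) a) := by
      show (QuotientGroup.mk' N) s * (QuotientGroup.mk' N) a
        = (QuotientGroup.mk' N) a * (QuotientGroup.mk' N) s
    --
      rw [← map_mul, ← map_mul]
      show ((s * a : H) : H ⧸ N) = ((a * s : H) : H ⧸ N)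
      rw [QuotientGroup.eq]
      have heq : (s * a)⁻¹ * (a * s) = c⁻¹ := by rw [hc]; group
      rw [heq]
      exact Subgroup.inv_mem _ hcN
    have hq : ∀ x y : H, Commute ((QuotientGroup.mk' N) x) ((QuotientGroup.mk' N) y) := by
      intro x y
      have hx : (QuotientGroup.mk' N) x ∈ Subgroup.closure ((QuotientGroup.mk' N) '' {s, a}) := by
        rw [hsurj]; trivial
      have hy : (QuotientGroup.mk' N) y ∈ Subgroup.closure ((QuotientGroup.mk' N) '' {s, a}) := by
        rw [hsurj]; trivial
      refine Subgroup.closure_induction₂ ?_ ?_ ?_ ?_ ?_ ?_ ?_ hx hy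
      · rintro u v ⟨u', hu', rfl⟩ ⟨v', hv', rfl⟩
        rcases hu' with rfl | rfl <;> rcases hv' with rfl | rfl
        · exact Commute.refl _
        · exact hbase
        · exact hbase.symm
        · exact Commute.refl _
      · exact fun x _ => Commute.one_left _
      · exact fun x _ => Commute.one_right _
      · exact fun x y z _ _ _ h1 h2 => h1.mul_left h2
      · exact fun y z x _ _ _ h1 h2 => h1.mul_right h2
      · exact fun x y _ _ h1 => h1.inv_left
      · exact fun x y _ _ h1 => h1.inv_right
    open scoped commutatorElement in
    have h1 : (QuotientGroup.mk' N) ⁅g, h⁆ = 1 := by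
      rw [map_commutatorElement]
      exact commutatorElement_eq_one_iff_commute.2 (hq g h)
    exact (QuotientGroup.eq_one_iff _).1 h1
  have hNleE : N ≤ Subgroup.closure E := by
    rw [hN, Subgroup.closure_le]
    rintro x ⟨⟨k, j⟩, rfl⟩
    exact hallE k j
  have hA_eq : commutator H = Subgroup.closure E := by
    refine le_antisymm (le_trans hcomm_le hNleE) ?_
    rw [Subgroup.closure_le]
    intro x hx
    exact hEA x hx
  have hAfg : (commutator H).FG := (Subgroup.fg_iff _).2 ⟨E, hA_eq.symm, hEfin⟩
  constructor
  · refine ⟨⟨2, ?_⟩⟩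
    rw [eq_bot_iff]
    show ⁅derivedSeries H 1, derivedSeries H 1⁆ ≤ ⊥
    rw [Subgroup.commutator_le]
    intro g hg h hh
    rw [Subgroup.mem_bot, commutatorElement_eq_one_iff_commute]
    exact hMeta g h hg hh
  · intro S
    apply aux_fg_of_map_of_ker (QuotientGroup.mk' (commutator H)) S
    · letI : CommGroup (H ⧸ commutator H) := inferInstanceAs (CommGroup (Abelianization H))
      apply aux_comm_subgroup_fg
      refine Group.fg_iff.2 ⟨(QuotientGroup.mk' (commutator H)) '' {s, a}, ?_,
        ((Set.finite_singleton a).insert s).image _⟩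
      rw [← MonoidHom.map_closure, hgen]
      exact Subgroup.map_top_of_surjective _ (QuotientGroup.mk'_surjective _)
    · rw [QuotientGroup.ker_mk']
      letI : CommGroup ↥(commutator H) :=
        { (inferInstance : Group ↥(commutator H)) with
          mul_comm := fun x y => Subtype.ext (hMeta ↑x ↑y x.2 y.2) }
      have hfgA : Group.FG ↥(commutator H) := (Group.fg_iff_subgroup_fg _).2 hAfg
      have h1 : ((S ⊓ commutator H).subgroupOf (commutator H)).FG := aux_comm_subgroup_fg hfgA _
      have h2 := aux_fg_map h1 (commutator H).subtype
      rwa [Subgroup.subgroupOf_map_subtype, inf_assoc, inf_idem] at h2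
end
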